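/- arXiv:dg-ga/9606009 — 3 statements merged into one kernel-verified Lean document; each statement's English description precedes it below -/
import Mathlib

section
/- Let V be a real inner product space, α ∈ V a nonzero vector, and s_α(x) = x − (2⟨x,α⟩/⟨α,α⟩)α the reflection through the hyperplane perpendicular to α. Let a, β, μ ∈ V be such that ⟨β, a⟩ > 0, ⟨s_α(β), a⟩ < 0, 2⟨β,α⟩/⟨α,α⟩ = n for some positive integer n (so s_α(β) = β − nα), and 2⟨μ,α⟩/⟨α,α⟩ = c for some positive integer c (so s_α(μ) = μ − cα). Then there exists an integer j with 0 ≤ j < n such that the vector λ = s_α(β) + jα, a term of the α-string from s_α(β) to β, satisfies either (⟨λ, a⟩ ≤ 0 and ⟨λ + μ, a⟩ ≥ 0) or (⟨λ + α, a⟩ ≥ 0 and ⟨λ + α + s_α(μ), a⟩ ≤ 0). -/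
open RealInnerProductSpace

/-- Lemma (killweightlem): with `s_α x = x - (2⟪x,α⟫/⟪α,α⟫) • α` the reflection through the
hyperplane perpendicular to `α`, if `⟪β, a⟫ > 0`, `⟪s_α β, a⟫ < 0`,
`2⟪β,α⟫/⟪α,α⟫ = n ≥ 1` (so `s_α β = β - n • α`) and `2⟪μ,α⟫/⟪α,α⟫ = c ≥ 1`
(so `s_α μ = μ - c • α`), then some term `λ = s_α β + j • α` (`0 ≤ j < n`) of the α-string
from `s_α β` to `β` satisfies either (`⟪λ, a⟫ ≤ 0` and `⟪λ + μ, a⟫ ≥ 0`) or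
(`⟪λ + α, a⟫ ≥ 0` and `⟪λ + α + s_α μ, a⟫ ≤ 0`). -/
theorem alpha_string_crossing
    {V : Type*} [NormedAddCommGroup V] [InnerProductSpace ℝ V]
    (α : V) (hα : α ≠ 0) (a β μ : V) (n c : ℕ) (hn : 0 < n) (hc : 0 < c)
    (hβa : 0 < ⟪β, a⟫)
    (hsβa : ⟪β - (2 * ⟪β, α⟫ / ⟪α, α⟫) • α, a⟫ < 0)
    (hβα : 2 * ⟪β, α⟫ / ⟪α, α⟫ = (n : ℝ))
    (hμα : 2 * ⟪μ, α⟫ / ⟪α, α⟫ = (c : ℝ)) :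
    ∃ j : ℕ, j < n ∧
      ((⟪(β - (n : ℝ) • α) + (j : ℝ) • α, a⟫ ≤ 0 ∧
          0 ≤ ⟪(β - (n : ℝ) • α) + (j : ℝ) • α + μ, a⟫) ∨
        (0 ≤ ⟪(β - (n : ℝ) • α) + (j : ℝ) • α + α, a⟫ ∧
          ⟪(β - (n : ℝ) • α) + (j : ℝ) • α + α + (μ - (c : ℝ) • α), a⟫ ≤ 0)) := by

  classical
  set A := ⟪α, a⟫ with hA
  set b := ⟪β, a⟫ with hb
  set m := ⟪μ, a⟫ with hm
  have hs : b - (n : ℝ) * A < 0 := by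
    have h := hsβa
    rw [hβα] at h
    simpa [inner_sub_left, real_inner_smul_left, hA, hb] using h
  have hnpos : (0 : ℝ) < n := by exact_mod_cast hn
  have hcpos : (1 : ℝ) ≤ c := by exact_mod_cast hc
  have hApos : 0 < A := by nlinarith
  set P : ℕ → Prop := fun j => b + ((j : ℝ) - n) * A ≤ 0 with hP
  have hP0 : P 0 := by simp only [hP, Nat.cast_zero]; nlinarith
  set j := Nat.findGreatest P (n - 1) with hj
  have hPj : P j := Nat.findGreatest_spec (Nat.zero_le _) hP0
  have hjlt : j < n := lt_of_le_of_lt (Nat.findGreatest_le _) (by omega)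
  have hnext : 0 ≤ b + ((j : ℝ) + 1 - n) * A := by
    by_cases h : j = n - 1
    · have hcast : ((j : ℝ) + 1) = n := by
        have : j + 1 = n := by omega
        exact_mod_cast congrArg (Nat.cast : ℕ → ℝ) this
      rw [hcast]
      have : b + ((n : ℝ) - n) * A = b := by ring
      rw [this]
      exact le_of_lt hβa
    · have hle : j + 1 ≤ n - 1 := by omega
      have hgt := Nat.findGreatest_is_greatest (Nat.lt_succ_self j) hle
      rw [hP] at hgt
      push_neg at hgt
      push_cast at hgt ⊢
      linarith
  have e1 : ⟪(β - (n : ℝ) • α) + (j : ℝ) • α, a⟫ = b + ((j : ℝ) - n) * A := by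
    simp [inner_sub_left, inner_add_left, real_inner_smul_left, hA, hb]; ring
  have e2 : ⟪(β - (n : ℝ) • α) + (j : ℝ) • α + μ, a⟫ = b + ((j : ℝ) - n) * A + m := by
    simp [inner_sub_left, inner_add_left, real_inner_smul_left, hA, hb, hm]; ring
  have e3 : ⟪(β - (n : ℝ) • α) + (j : ℝ) • α + α, a⟫ = b + ((j : ℝ) + 1 - n) * A := by
    simp [inner_sub_left, inner_add_left, real_inner_smul_left, hA, hb]; ring
  have e4 : ⟪(β - (n : ℝ) • α) + (j : ℝ) • α + α + (μ - (c : ℝ) • α), a⟫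
      = b + ((j : ℝ) + 1 - n) * A + m - c * A := by
    simp [inner_sub_left, inner_add_left, real_inner_smul_left, hA, hb, hm]; ring
  refine ⟨j, hjlt, ?_⟩
  rw [e1, e2, e3, e4]
  have hPj' : b + ((j : ℝ) - n) * A ≤ 0 := hPj
  by_cases hcase : 0 ≤ b + ((j : ℝ) - n) * A + m
  · exact Or.inl ⟨hPj', hcase⟩
  · push_neg at hcase
    refine Or.inr ⟨hnext, ?_⟩
    nlinarith
end

section
/- Let L be a Lie algebra over a field F and f : L → L a Lie algebra automorphism. For λ ∈ F let G(λ) = ⋃_{m ≥ 1} ker((f − λ·id)^m) denote the generalized eigenspace of f for λ. Then ⁅G(λ), G(μ)⁆ ⊆ G(λμ) for all λ, μ ∈ F. More precisely, if (f − λ·id)^m x = 0 and (f − μ·id)^k y = 0, then (f − λμ·id)^{m+k−1} ⁅x, y⁆ = 0. -/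
private lemma lie_gen_aux
    {F L : Type*} [Field F] [LieRing L] [LieAlgebra F L]
    (f : L ≃ₗ[F] L) (hf : ∀ x y : L, f ⁅x, y⁆ = ⁅f x, f y⁆) (lam mu : F) :
    ∀ (n m k : ℕ) (x y : L), m + k = n →
      ((f.toLinearMap - lam • 1 : Module.End F L) ^ (m + 1)) x = 0 →
      ((f.toLinearMap - mu • 1 : Module.End F L) ^ (k + 1)) y = 0 →
      ((f.toLinearMap - (lam * mu) • 1 : Module.End F L) ^ (n + 1)) ⁅x, y⁆ = 0 := by
  set A : Module.End F L := f.toLinearMap - lam • 1 with hA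
  set B : Module.End F L := f.toLinearMap - mu • 1 with hB
  set C : Module.End F L := f.toLinearMap - (lam * mu) • 1 with hC
  have hkey : ∀ x y : L, C ⁅x, y⁆ = ⁅A x, f y⁆ + lam • ⁅x, B y⁆ := by
    intro x y
    simp only [hA, hB, hC, LinearMap.sub_apply, LinearMap.smul_apply, Module.End.one_apply,
      LinearEquiv.coe_coe, hf, sub_lie, lie_sub, lie_smul, smul_lie, smul_smul]
    module
  have hcomm : ∀ (j : ℕ) (z : L), (B ^ j) (f z) = f ((B ^ j) z) := by
    intro j z
    have h : Commute (f.toLinearMap : Module.End F L) B := by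
      rw [hB]
      exact (Commute.refl _).sub_right ((Commute.one_right _).smul_right mu)
    have := LinearMap.congr_fun ((h.symm.pow_left j)) z
    simpa [Module.End.mul_apply] using this
  intro n
  induction n with
  | zero =>
    intro m k x y hmk hx hy
    obtain ⟨hm, hk⟩ : m = 0 ∧ k = 0 := by omega
    subst hm; subst hk
    simp only [zero_add, pow_one] at hx hy ⊢
    rw [hkey x y, hx, hy]
    simp
  | succ n ih =>
    intro m k x y hmk hx hy
    have hstep : (C ^ (n + 2)) ⁅x, y⁆ = (C ^ (n + 1)) (C ⁅x, y⁆) := by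
      rw [pow_succ]
      simp [Module.End.mul_apply]
    rw [hstep, hkey x y, map_add, map_smul]
    have h1 : (C ^ (n + 1)) ⁅A x, f y⁆ = 0 := by
      rcases m with _ | m'
      · -- A x = 0
        have : A x = 0 := by simpa using hx
        simp [this]
      · have hx' : (A ^ (m' + 1)) (A x) = 0 := by
          have : (A ^ (m' + 1) * A) x = 0 := by
            rw [← pow_succ]
            exact hx
          simpa [Module.End.mul_apply] using this
        have hy' : (B ^ (k + 1)) (f y) = 0 := by
          rw [hcomm, hy]; simp
        exact ih m' k (A x) (f y) (by omega) hx' hy'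
    have h2 : (C ^ (n + 1)) ⁅x, B y⁆ = 0 := by
      rcases k with _ | k'
      · have : B y = 0 := by simpa using hy
        simp [this]
      · have hy' : (B ^ (k' + 1)) (B y) = 0 := by
          have : (B ^ (k' + 1) * B) y = 0 := by
            rw [← pow_succ]
            exact hy
          simpa [Module.End.mul_apply] using this
        exact ih m k' x (B y) (by omega) hx hy'
    rw [h1, h2]
    simp

/-- For a Lie algebra automorphism `f` of a Lie algebra `L` over a field `F`, the bracket of
the generalized eigenspaces `G(λ) = ⋃_{m ≥ 1} ker (f - λ·id)^m` and `G(μ)` lies in `G(λμ)`;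
more precisely, if `(f - λ·id)^m x = 0` and `(f - μ·id)^k y = 0` (`m, k ≥ 1`), then
`(f - λμ·id)^(m+k-1) ⁅x, y⁆ = 0`. -/
theorem lie_genEigenspace_bracket
    {F L : Type*} [Field F] [LieRing L] [LieAlgebra F L]
    (f : L ≃ₗ[F] L) (hf : ∀ x y : L, f ⁅x, y⁆ = ⁅f x, f y⁆) :
    (∀ (lam mu : F) (x y : L),
      (∃ m : ℕ, 1 ≤ m ∧ ((f.toLinearMap - lam • 1 : Module.End F L) ^ m) x = 0) →
      (∃ k : ℕ, 1 ≤ k ∧ ((f.toLinearMap - mu • 1 : Module.End F L) ^ k) y = 0) →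
      ∃ p : ℕ, 1 ≤ p ∧ ((f.toLinearMap - (lam * mu) • 1 : Module.End F L) ^ p) ⁅x, y⁆ = 0) ∧
    (∀ (lam mu : F) (m k : ℕ) (x y : L), 1 ≤ m → 1 ≤ k →
      ((f.toLinearMap - lam • 1 : Module.End F L) ^ m) x = 0 →
      ((f.toLinearMap - mu • 1 : Module.End F L) ^ k) y = 0 →
      ((f.toLinearMap - (lam * mu) • 1 : Module.End F L) ^ (m + k - 1)) ⁅x, y⁆ = 0) := by
  have main : ∀ (lam mu : F) (m k : ℕ) (x y : L), 1 ≤ m → 1 ≤ k →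
      ((f.toLinearMap - lam • 1 : Module.End F L) ^ m) x = 0 →
      ((f.toLinearMap - mu • 1 : Module.End F L) ^ k) y = 0 →
      ((f.toLinearMap - (lam * mu) • 1 : Module.End F L) ^ (m + k - 1)) ⁅x, y⁆ = 0 := by
    intro lam mu m k x y hm hk hx hy
    obtain ⟨m', rfl⟩ : ∃ m', m = m' + 1 := ⟨m - 1, by omega⟩
    obtain ⟨k', rfl⟩ : ∃ k', k = k' + 1 := ⟨k - 1, by omega⟩
    have h := lie_gen_aux f hf lam mu (m' + k') m' k' x y rfl hx hy
    have heq : m' + 1 + (k' + 1) - 1 = m' + k' + 1 := by omega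
    rwa [heq]
  exact ⟨fun lam mu x y ⟨m, hm, hx⟩ ⟨k, hk, hy⟩ =>
    ⟨m + k - 1, by omega, main lam mu m k x y hm hk hx hy⟩, main⟩
end

section
/- Let K be a subgroup of the orthogonal group O(n) of ℝⁿ and H = ℝⁿ ⋊ K the semidirect product with multiplication (a₁, k₁)(a₂, k₂) = (a₁ + k₁a₂, k₁k₂). For h = (a, k) ∈ H define N(h) = ‖k − I‖ + ‖a‖, where ‖k − I‖ is the operator norm and ‖a‖ the Euclidean norm. Let L ≥ 1, let j ≥ 1, and let q₁, …, q_j ∈ H be elements whose translation parts all have Euclidean norm at most L, and set q = q₁⋯q_j. Then for every h ∈ H, N(q h q⁻¹) ≤ (1 + jL) · N(h). In particular, the distortion of the distance to the identity under conjugation by a product of j elements from a bounded set grows at most linearly in j. -/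
namespace Stmt6

variable {n : ℕ} {K : Subgroup (EuclideanSpace ℝ (Fin n) ≃ₗᵢ[ℝ] EuclideanSpace ℝ (Fin n))}

/-- Multiplication in the semidirect product `H = ℝⁿ ⋊ K`, for `K` a subgroup of the
orthogonal group (linear isometries) of Euclidean `ℝⁿ`:
`(a₁, k₁)(a₂, k₂) = (a₁ + k₁ a₂, k₁ k₂)`. -/
noncomputable def hMul (x y : EuclideanSpace ℝ (Fin n) × K) : EuclideanSpace ℝ (Fin n) × K :=
  (x.1 + (x.2 : EuclideanSpace ℝ (Fin n) ≃ₗᵢ[ℝ] EuclideanSpace ℝ (Fin n)) y.1, x.2 * y.2)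

/-- Inversion in `H = ℝⁿ ⋊ K`: `(a, k)⁻¹ = (-k⁻¹ a, k⁻¹)`. -/
noncomputable def hInv (x : EuclideanSpace ℝ (Fin n) × K) : EuclideanSpace ℝ (Fin n) × K :=
  (-((x.2⁻¹ : K) : EuclideanSpace ℝ (Fin n) ≃ₗᵢ[ℝ] EuclideanSpace ℝ (Fin n)) x.1, x.2⁻¹)

/-- The ordered product `q₁ q₂ ⋯ q_j` in `H = ℝⁿ ⋊ K` (empty product is the
identity `(0, 1)`). -/
noncomputable def hProd : List (EuclideanSpace ℝ (Fin n) × K) → EuclideanSpace ℝ (Fin n) × K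
  | [] => (0, 1)
  | x :: xs => hMul x (hProd xs)

/-- The gauge `N(a, k) = ‖k − I‖_op + ‖a‖` measuring the distance of `(a, k) ∈ ℝⁿ ⋊ K`
to the identity. -/
noncomputable def gauge (x : EuclideanSpace ℝ (Fin n) × K) : ℝ :=
  ‖((x.2 : EuclideanSpace ℝ (Fin n) ≃ₗᵢ[ℝ] EuclideanSpace ℝ (Fin n)).toLinearIsometry.toContinuousLinearMap
      - 1 : EuclideanSpace ℝ (Fin n) →L[ℝ] EuclideanSpace ℝ (Fin n))‖ + ‖x.1‖

lemma hProd_fst_norm_le (l : List (EuclideanSpace ℝ (Fin n) × K)) :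
    ‖(hProd l).1‖ ≤ (l.map fun x => ‖x.1‖).sum := by
  induction l with
  | nil => simp [hProd]
  | cons x xs ih =>
    simp only [hProd, hMul, List.map_cons, List.sum_cons]
    calc ‖x.1 + (x.2 : EuclideanSpace ℝ (Fin n) ≃ₗᵢ[ℝ] EuclideanSpace ℝ (Fin n)) (hProd xs).1‖
        ≤ ‖x.1‖ + ‖(x.2 : EuclideanSpace ℝ (Fin n) ≃ₗᵢ[ℝ] EuclideanSpace ℝ (Fin n)) (hProd xs).1‖ :=
          norm_add_le _ _
      _ = ‖x.1‖ + ‖(hProd xs).1‖ := by rw [LinearIsometryEquiv.norm_map]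
      _ ≤ ‖x.1‖ + (xs.map fun x => ‖x.1‖).sum := by linarith

/-- If `q₁, …, q_j ∈ H = ℝⁿ ⋊ K` (with `K` a subgroup of the orthogonal group `O(n)`) have
translation parts of norm at most `L` (`L ≥ 1`), and `q = q₁⋯q_j`, then
`N(q h q⁻¹) ≤ (1 + j L) · N(h)` for every `h ∈ H`: conjugation distorts the distance to the
identity at most linearly in `j`. -/
theorem gauge_conj_le (L : ℝ) (hL : 1 ≤ L) (j : ℕ) (hj : 1 ≤ j)
    (q : Fin j → EuclideanSpace ℝ (Fin n) × K) (hq : ∀ i, ‖(q i).1‖ ≤ L)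
    (h : EuclideanSpace ℝ (Fin n) × K) :
    gauge (hMul (hMul (hProd (List.ofFn q)) h) (hInv (hProd (List.ofFn q))))
      ≤ (1 + (j : ℝ) * L) * gauge h := by
  set E := EuclideanSpace ℝ (Fin n)
  set p := hProd (List.ofFn q) with hp
  set a := p.1
  set k : E ≃ₗᵢ[ℝ] E := (p.2 : E ≃ₗᵢ[ℝ] E)
  set m : E ≃ₗᵢ[ℝ] E := (h.2 : E ≃ₗᵢ[ℝ] E)
  set b := h.1
  set C := ‖(m.toLinearIsometry.toContinuousLinearMap - 1 : E →L[ℝ] E)‖ with hC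
  have hCnn : 0 ≤ C := norm_nonneg _
  -- norm of translation part of p
  have ha : ‖a‖ ≤ (j : ℝ) * L := by
    calc ‖a‖ ≤ ((List.ofFn q).map fun x => ‖x.1‖).sum := hProd_fst_norm_le _
      _ = ∑ i : Fin j, ‖(q i).1‖ := by
          rw [List.map_ofFn, List.sum_ofFn]; rfl
      _ ≤ ∑ i : Fin j, L := Finset.sum_le_sum fun i _ => hq i
      _ = (j : ℝ) * L := by simp [mul_comm]
  -- the conjugated element
  have key : ∀ v : E, ‖k (m (k.symm v)) - v‖ ≤ C * ‖v‖ := by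
    intro v
    have : k (m (k.symm v)) - v = k (m (k.symm v)) - k (k.symm v) := by
      rw [k.apply_symm_apply]
    rw [this, ← dist_eq_norm, k.dist_map, dist_eq_norm]
    have : m (k.symm v) - k.symm v
        = (m.toLinearIsometry.toContinuousLinearMap - 1 : E →L[ℝ] E) (k.symm v) := by
      simp
    rw [this]
    calc ‖(m.toLinearIsometry.toContinuousLinearMap - 1 : E →L[ℝ] E) (k.symm v)‖
        ≤ C * ‖k.symm v‖ := (m.toLinearIsometry.toContinuousLinearMap - 1).le_opNorm _
      _ = C * ‖v‖ := by rw [k.symm.norm_map]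
  -- coercion facts
  have hcoe : ((p.2 * h.2 * p.2⁻¹ : K) : E ≃ₗᵢ[ℝ] E) = k * m * k⁻¹ := by
    push_cast [hp]
    rfl
  have hinvk : (k⁻¹ : E ≃ₗᵢ[ℝ] E) = k.symm := rfl
  -- gauge of conjugate
  rw [gauge]
  simp only [hMul, hInv]
  have heq1 : ‖(((p.2 * h.2) * p.2⁻¹ : K) : E ≃ₗᵢ[ℝ] E).toLinearIsometry.toContinuousLinearMap
      - (1 : E →L[ℝ] E)‖ ≤ C := by
    apply ContinuousLinearMap.opNorm_le_bound _ hCnn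
    intro v
    have : ((((p.2 * h.2) * p.2⁻¹ : K) : E ≃ₗᵢ[ℝ] E).toLinearIsometry.toContinuousLinearMap
        - (1 : E →L[ℝ] E)) v = k (m (k.symm v)) - v := by
      simp [hcoe, hinvk, LinearIsometryEquiv.coe_mul, Function.comp]
    rw [this]
    exact key v
  have heq2 : ‖(a + k b) + ((p.2 * h.2 : K) : E ≃ₗᵢ[ℝ] E) (-(((p.2⁻¹ : K) : E ≃ₗᵢ[ℝ] E) a))‖
      ≤ ‖b‖ + C * ‖a‖ := by
    have hc2 : ((p.2 * h.2 : K) : E ≃ₗᵢ[ℝ] E) = k * m := by push_cast; rfl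
    have hc3 : ((p.2⁻¹ : K) : E ≃ₗᵢ[ℝ] E) = k.symm := by push_cast; rfl
    have : (a + k b) + ((p.2 * h.2 : K) : E ≃ₗᵢ[ℝ] E) (-(((p.2⁻¹ : K) : E ≃ₗᵢ[ℝ] E) a))
        = k b - (k (m (k.symm a)) - a) := by
      rw [hc2, hc3]
      simp [LinearIsometryEquiv.coe_mul, Function.comp]
      abel
    rw [this]
    calc ‖k b - (k (m (k.symm a)) - a)‖ ≤ ‖k b‖ + ‖k (m (k.symm a)) - a‖ := norm_sub_le _ _
      _ ≤ ‖b‖ + C * ‖a‖ := by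
          rw [k.norm_map]
          exact add_le_add le_rfl (key a)
  have hgauge : gauge h = C + ‖b‖ := rfl
  have hbnn : (0:ℝ) ≤ ‖b‖ := norm_nonneg _
  have hann : (0:ℝ) ≤ ‖a‖ := norm_nonneg _
  have hjL : (0:ℝ) ≤ (j:ℝ) * L := le_trans hann ha
  calc ‖((((p.2 * h.2) * p.2⁻¹ : K) : E ≃ₗᵢ[ℝ] E)).toLinearIsometry.toContinuousLinearMap
        - (1 : E →L[ℝ] E)‖
      + ‖(a + k b) + ((p.2 * h.2 : K) : E ≃ₗᵢ[ℝ] E) (-(((p.2⁻¹ : K) : E ≃ₗᵢ[ℝ] E) a))‖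
      ≤ C + (‖b‖ + C * ‖a‖) := add_le_add heq1 heq2
    _ ≤ C + (‖b‖ + C * ((j:ℝ) * L)) := by nlinarith [mul_le_mul_of_nonneg_left ha hCnn]
    _ ≤ (1 + (j : ℝ) * L) * (C + ‖b‖) := by nlinarith
    _ = (1 + (j : ℝ) * L) * gauge h := by rw [hgauge]


end Stmt6
end
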